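/- For every n ≥ 1, the identity F_n(12/3; q,r,s,t) = r^{C(n,2)} s^{C(n,2)} + ∑_{m=1}^{n-1} ∑_{i=1}^{m} q^{(n-m)(m-i)} r^{C(m,2) + (n-m)(i-1)} s^{C(m,2)} t^{m-i} holds in ℤ[q,r,s,t]. -/

import Mathlib

open Finset

/-- `IsRGF w` : `w = a₁⋯aₙ` is a restricted growth function: all letters are
positive, the first letter is `1` and each later letter is at most one more
than the maximum of the preceding prefix. -/
def IsRGF (w : List ℕ) : Prop :=
  (∀ a ∈ w, 1 ≤ a) ∧
  (0 < w.length → w.getD 0 0 = 1) ∧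
  (∀ j : ℕ, j + 1 < w.length →
    w.getD (j + 1) 0 ≤ 1 + (w.take (j + 1)).foldr max 0)

/-- The set partition encoded by the word `w` contains the set-partition
pattern encoded by the word `p`:  there are positions, listed increasingly,
whose "same block" (= same letter) pattern in `w` is exactly that of `p`. -/
def ContainsPat (w p : List ℕ) : Prop :=
  ∃ f : Fin p.length → Fin w.length, StrictMono f ∧
    ∀ a b : Fin p.length, (w.get (f a) = w.get (f b) ↔ p.get a = p.get b)

/-- `Rn n p` : the restricted growth functions of length `n` whose associated
set partition avoids the pattern (of set partitions) encoded by the RGF `p`.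
Via the standard bijection `σ ↦ w(σ)` this is `R_n(π) ≅ Π_n(π)`.
Patterns of `[3]`:  `1/2/3 ↦ [1,2,3]`, `1/23 ↦ [1,2,2]`, `13/2 ↦ [1,2,1]`,
`12/3 ↦ [1,1,2]`, `123 ↦ [1,1,1]`. -/
def Rn (n : ℕ) (p : List ℕ) : Set (List ℕ) :=
  {w | w.length = n ∧ IsRGF w ∧ ¬ ContainsPat w p}

/-- `lb` : sum over positions `j` of the number of distinct values occurring
before position `j` that are bigger than the letter at `j`. -/
def statLB (w : List ℕ) : ℕ :=
  ∑ j ∈ Finset.range w.length,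
    ((w.take j).toFinset.filter (fun v => w.getD j 0 < v)).card

/-- `ls` : left and smaller. -/
def statLS (w : List ℕ) : ℕ :=
  ∑ j ∈ Finset.range w.length,
    ((w.take j).toFinset.filter (fun v => v < w.getD j 0)).card

/-- `rb` : right and bigger. -/
def statRB (w : List ℕ) : ℕ :=
  ∑ j ∈ Finset.range w.length,
    ((w.drop (j + 1)).toFinset.filter (fun v => w.getD j 0 < v)).card

/-- `rs` : right and smaller. -/
def statRS (w : List ℕ) : ℕ :=
  ∑ j ∈ Finset.range w.length,
    ((w.drop (j + 1)).toFinset.filter (fun v => v < w.getD j 0)).card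

/-- The four–variable generating function
`F_n(π;q,r,s,t) = ∑_{σ∈Π_n(π)} q^{lb} r^{ls} s^{rb} t^{rs}`, with
`q = X 0`, `r = X 1`, `s = X 2`, `t = X 3`. -/
noncomputable def Fgen (n : ℕ) (p : List ℕ) : MvPolynomial (Fin 4) ℤ :=
  ∑ᶠ w ∈ Rn n p,
    (MvPolynomial.X 0 : MvPolynomial (Fin 4) ℤ) ^ statLB w *
      MvPolynomial.X 1 ^ statLS w *
      MvPolynomial.X 2 ^ statRB w *
      MvPolynomial.X 3 ^ statRS w

/-- `LB_n(π;q)`. -/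
noncomputable def LBp (n : ℕ) (p : List ℕ) : Polynomial ℤ :=
  ∑ᶠ w ∈ Rn n p, Polynomial.X ^ statLB w

/-- `LS_n(π;q)`. -/
noncomputable def LSp (n : ℕ) (p : List ℕ) : Polynomial ℤ :=
  ∑ᶠ w ∈ Rn n p, Polynomial.X ^ statLS w

/-- `RB_n(π;q)`. -/
noncomputable def RBp (n : ℕ) (p : List ℕ) : Polynomial ℤ :=
  ∑ᶠ w ∈ Rn n p, Polynomial.X ^ statRB w

/-- `RS_n(π;q)`. -/
noncomputable def RSp (n : ℕ) (p : List ℕ) : Polynomial ℤ :=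
  ∑ᶠ w ∈ Rn n p, Polynomial.X ^ statRS w

/-! An RGF avoids `12/3` exactly when it is constant from its first repeated letter on. Before
the first repetition the growth condition forces the prefix `1 2 ⋯ m`; if the next letter repeats
some `i ≤ m`, every later letter other than `i` would complete a copy of `12/3` with these two
`i`s. So the avoiders are `1 2 ⋯ n` and the words `1 2 ⋯ m iⁿ⁻ᵐ` with `1 ≤ i ≤ m < n`. On the
latter the statistics are read off directly: `lb = (n - m)(m - i)`, `ls = C(m,2) + (n - m)(i - 1)`,
`rb = C(m,2)` and `rs = m - i`, since each of `i + 1, …, m` sees exactly one smaller letter, `i`,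
to its right. -/

def stairWord (m i t : ℕ) : List ℕ := List.range' 1 m ++ List.replicate t i

section
variable {m i t : ℕ}

@[simp]
lemma length_stairWord : (stairWord m i t).length = m + t := by
  simp [stairWord]

lemma getD_stairWord {j : ℕ} (hj : j < m + t) :
    (stairWord m i t).getD j 0 = if j < m then j + 1 else i := by
  simp only [stairWord, List.getD_eq_getElem?_getD, List.getElem?_append, List.getElem?_replicate]
  split_ifs <;> simp_all <;> omega

lemma mem_take_stairWord {j x : ℕ} (hi : 1 ≤ i) (him : i ≤ m) :
    x ∈ (stairWord m i t).take j ↔ 1 ≤ x ∧ x ≤ min j m := by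
  simp only [stairWord, List.take_append, List.range'_eq_map_range, ← List.map_take,
    List.take_range, List.mem_append, List.mem_map, List.mem_range, List.take_replicate,
    List.mem_replicate, List.length_map, List.length_range]
  constructor
  · rintro (⟨a, ha, rfl⟩ | ⟨h, rfl⟩) <;> omega
  · exact fun h => .inl ⟨x - 1, by omega, by omega⟩

lemma mem_drop_stairWord {k x : ℕ} :
    x ∈ (stairWord m i t).drop k ↔ (k < x ∧ x ≤ m) ∨ (x = i ∧ 0 < t ∧ k < m + t) := by
  simp only [stairWord, List.drop_append, List.drop_range', List.mem_append, List.mem_range'_1,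
    List.drop_replicate, List.mem_replicate, List.length_range']
  omega

lemma isRGF_stairWord (hi : 1 ≤ i) (him : i ≤ m) : IsRGF (stairWord m i t) := by
  refine ⟨fun a ha => ?_, fun h => ?_, fun j hj => ?_⟩
  · simp only [stairWord, List.mem_append, List.mem_range'_1, List.mem_replicate] at ha
    omega
  · rw [getD_stairWord (by simpa using h)]
    split_ifs <;> omega
  · have hmax : min (j + 1) m ≤ ((stairWord m i t).take (j + 1)).foldr max 0 :=
      List.le_max_of_le' 0 ((mem_take_stairWord hi him).2 ⟨by omega, le_rfl⟩) le_rfl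
    rw [getD_stairWord (by simpa using hj)]
    split_ifs <;> omega

lemma statLB_stairWord (hi : 1 ≤ i) (him : i ≤ m) : statLB (stairWord m i t) = t * (m - i) := by
  rw [statLB, length_stairWord, sum_range_add]
  have hpre : ∀ j ∈ range m, (((stairWord m i t).take j).toFinset.filter
      (fun v => (stairWord m i t).getD j 0 < v)).card = 0 := by
    intro j hj
    rw [mem_range] at hj
    rw [card_eq_zero, filter_eq_empty_iff]
    intro x hx
    rw [List.mem_toFinset, mem_take_stairWord hi him] at hx
    rw [getD_stairWord (by omega), if_pos hj]
    omega
  have hsuf : ∀ k ∈ range t, (((stairWord m i t).take (m + k)).toFinset.filter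
      (fun v => (stairWord m i t).getD (m + k) 0 < v)) = Ioc i m := by
    intro k hk
    rw [mem_range] at hk
    ext x
    rw [mem_filter, List.mem_toFinset, mem_take_stairWord hi him, getD_stairWord (by omega),
      if_neg (by omega), mem_Ioc]
    omega
  rw [sum_eq_zero hpre, sum_congr rfl fun k hk => congrArg card (hsuf k hk), sum_const,
    card_range, Nat.card_Ioc, smul_eq_mul, zero_add]

lemma statLS_stairWord (hi : 1 ≤ i) (him : i ≤ m) :
    statLS (stairWord m i t) = m.choose 2 + t * (i - 1) := by
  rw [statLS, length_stairWord, sum_range_add]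
  have hpre : ∀ j ∈ range m, (((stairWord m i t).take j).toFinset.filter
      (fun v => v < (stairWord m i t).getD j 0)) = Icc 1 j := by
    intro j hj
    rw [mem_range] at hj
    ext x
    rw [mem_filter, List.mem_toFinset, mem_take_stairWord hi him, getD_stairWord (by omega),
      if_pos hj, mem_Icc]
    omega
  have hsuf : ∀ k ∈ range t, (((stairWord m i t).take (m + k)).toFinset.filter
      (fun v => v < (stairWord m i t).getD (m + k) 0)) = Ico 1 i := by
    intro k hk
    rw [mem_range] at hk
    ext x
    rw [mem_filter, List.mem_toFinset, mem_take_stairWord hi him, getD_stairWord (by omega),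
      if_neg (by omega), mem_Ico]
    omega
  rw [sum_congr rfl fun j hj => congrArg card (hpre j hj),
    sum_congr rfl fun k hk => congrArg card (hsuf k hk), sum_const, card_range, Nat.card_Ico,
    smul_eq_mul]
  simp only [Nat.card_Icc, Nat.add_sub_cancel, sum_range_id, Nat.choose_two_right]

lemma statRB_stairWord (him : i ≤ m) : statRB (stairWord m i t) = m.choose 2 := by
  rw [statRB, length_stairWord, sum_range_add]
  have hpre : ∀ j ∈ range m, (((stairWord m i t).drop (j + 1)).toFinset.filter
      (fun v => (stairWord m i t).getD j 0 < v)) = Ioc (j + 1) m := by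
    intro j hj
    rw [mem_range] at hj
    ext x
    rw [mem_filter, List.mem_toFinset, mem_drop_stairWord, getD_stairWord (by omega),
      if_pos hj, mem_Ioc]
    omega
  have hsuf : ∀ k ∈ range t, (((stairWord m i t).drop (m + k + 1)).toFinset.filter
      (fun v => (stairWord m i t).getD (m + k) 0 < v)).card = 0 := by
    intro k hk
    rw [mem_range] at hk
    rw [card_eq_zero, filter_eq_empty_iff]
    intro x hx
    rw [List.mem_toFinset, mem_drop_stairWord] at hx
    rw [getD_stairWord (by omega), if_neg (by omega)]
    omega
  rw [sum_congr rfl fun j hj => congrArg card (hpre j hj), sum_eq_zero hsuf, add_zero]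
  simp only [Nat.card_Ioc]
  rw [sum_congr rfl fun j _ => (by omega : m - (j + 1) = m - 1 - j),
    sum_range_reflect (fun j => j) m, sum_range_id, Nat.choose_two_right]

lemma statRS_stairWord : statRS (stairWord m i t) = if t = 0 then 0 else m - i := by
  rw [statRS, length_stairWord, sum_range_add]
  have hpre : ∀ j ∈ range m, (((stairWord m i t).drop (j + 1)).toFinset.filter
      (fun v => v < (stairWord m i t).getD j 0)).card = if t ≠ 0 ∧ i ≤ j then 1 else 0 := by
    intro j hj
    rw [mem_range] at hj
    split_ifs with h
    · rw [card_eq_one]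
      refine ⟨i, ?_⟩
      ext x
      rw [mem_filter, List.mem_toFinset, mem_drop_stairWord, getD_stairWord (by omega),
        if_pos hj, mem_singleton]
      omega
    · rw [card_eq_zero, filter_eq_empty_iff]
      intro x hx
      rw [List.mem_toFinset, mem_drop_stairWord] at hx
      rw [getD_stairWord (by omega), if_pos hj]
      omega
  have hsuf : ∀ k ∈ range t, (((stairWord m i t).drop (m + k + 1)).toFinset.filter
      (fun v => v < (stairWord m i t).getD (m + k) 0)).card = 0 := by
    intro k hk
    rw [mem_range] at hk
    rw [card_eq_zero, filter_eq_empty_iff]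
    intro x hx
    rw [List.mem_toFinset, mem_drop_stairWord] at hx
    rw [getD_stairWord (by omega), if_neg (by omega)]
    omega
  rw [sum_congr rfl hpre, sum_eq_zero hsuf, add_zero, sum_boole]
  split_ifs with ht
  · simp [ht]
  · rw [Nat.cast_id, ← Nat.card_Ico i m]
    congr 1
    ext j
    simp only [mem_filter, mem_range, mem_Ico]
    omega

end

lemma containsPat_one_one_two_iff {w : List ℕ} :
    ContainsPat w [1, 1, 2] ↔ ∃ a b c, a < b ∧ b < c ∧ c < w.length ∧
      w.getD a 0 = w.getD b 0 ∧ w.getD b 0 ≠ w.getD c 0 := by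
  constructor
  · rintro ⟨f, hf, hpat⟩
    refine ⟨f 0, f 1, f 2, hf (by decide), hf (by decide), (f 2).2, ?_, ?_⟩
    · simpa [List.getD_eq_getElem] using (hpat 0 1).2 rfl
    · simpa [List.getD_eq_getElem] using (hpat 1 2).not.2 (by decide)
  · rintro ⟨a, b, c, hab, hbc, hc, hab', hbc'⟩
    refine ⟨![⟨a, by omega⟩, ⟨b, by omega⟩, ⟨c, hc⟩], ?_, ?_⟩
    · refine Fin.strictMono_iff_lt_succ.2 fun x => ?_
      fin_cases x <;> simpa [Fin.lt_def]
    · rw [List.getD_eq_getElem _ _ (by omega), List.getD_eq_getElem _ _ (by omega)] at hab'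
      rw [List.getD_eq_getElem _ _ (by omega), List.getD_eq_getElem _ _ hc] at hbc'
      intro x y
      fin_cases x <;> fin_cases y <;> simp [hab', hbc', hbc'.symm]

lemma not_containsPat_stairWord {m i t : ℕ} : ¬ ContainsPat (stairWord m i t) [1, 1, 2] := by
  rw [containsPat_one_one_two_iff]
  rintro ⟨a, b, c, hab, hbc, hc, hab', hbc'⟩
  rw [length_stairWord] at hc
  rw [getD_stairWord (by omega), getD_stairWord (by omega)] at hab'
  rw [getD_stairWord (by omega), getD_stairWord hc] at hbc'
  split_ifs at hab' hbc' <;> omega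

lemma IsRGF.getD_le_succ_foldr_max {w : List ℕ} (hw : IsRGF w) {k : ℕ} (hk : k < w.length) :
    w.getD k 0 ≤ 1 + (w.take k).foldr max 0 := by
  cases k with
  | zero => exact (hw.2.1 hk).trans_le (Nat.le_add_right _ _)
  | succ j => exact hw.2.2 j hk

lemma IsRGF.take_eq_range' {w : List ℕ} (hw : IsRGF w) {k : ℕ} (hk : k ≤ w.length)
    (hnd : (w.take k).Nodup) : w.take k = List.range' 1 k := by
  induction k with
  | zero => simp
  | succ k ih =>
    have hk' : k < w.length := by omega
    rw [List.take_succ_eq_append_getElem hk', ← List.concat_eq_append, List.nodup_concat] at hnd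
    have hpre := ih (by omega) hnd.2
    have hnew : w[k] ∉ List.range' 1 k := hpre ▸ hnd.1
    have hpos : 1 ≤ w[k] := hw.1 _ (List.getElem_mem _)
    have hmax : (List.range' 1 k).foldr max 0 ≤ k :=
      List.max_le_of_forall_le _ _ fun x hx => by rw [List.mem_range'_1] at hx; omega
    have hgrow := hw.getD_le_succ_foldr_max hk'
    rw [hpre, List.getD_eq_getElem _ _ hk'] at hgrow
    rw [List.mem_range'_1] at hnew
    rw [List.take_succ_eq_append_getElem hk', hpre, List.range'_concat,
      show w[k] = 1 + 1 * k by omega]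

lemma getD_eq_of_take_eq_range' {w : List ℕ} {b j : ℕ} (h : w.take b = List.range' 1 b)
    (hj : j < b) : w.getD j 0 = j + 1 := by
  rw [List.getD_eq_getElem?_getD, ← List.getElem?_take_of_lt hj, h, List.getElem?_range' hj]
  simp [add_comm]

lemma exists_eq_stairWord_of_mem_Rn {n : ℕ} (hn : 1 ≤ n) {w : List ℕ}
    (hw : w ∈ Rn n [1, 1, 2]) :
    ∃ m i, 1 ≤ i ∧ i ≤ m ∧ m ≤ n ∧ (m < n ∨ i = m) ∧ w = stairWord m i (n - m) := by
  obtain ⟨hlen, hrgf, hav⟩ := hw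
  obtain ⟨b, hbn, hnd, hmax⟩ : ∃ b ≤ n, (w.take b).Nodup ∧ (b < n → ¬(w.take (b + 1)).Nodup) :=
    ⟨_, Nat.findGreatest_le n, Nat.findGreatest_spec (P := fun k => (w.take k).Nodup)
      (Nat.zero_le n) (by simp), fun h => Nat.findGreatest_is_greatest (lt_add_one _) h⟩
  have hpre := hrgf.take_eq_range' (by omega) hnd
  rcases hbn.lt_or_eq with hbn | rfl
  · have hb : b < w.length := by omega
    set c := w[b]
    have hc : c ∈ List.range' 1 b := by
      by_contra hc
      rw [List.take_succ_eq_append_getElem hb, ← List.concat_eq_append, List.nodup_concat,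
        hpre] at hmax
      exact hmax hbn ⟨hc, List.nodup_range'⟩
    rw [List.mem_range'_1] at hc
    have hconst : ∀ x ∈ w.drop b, x = c := by
      intro x hx
      obtain ⟨j, hj, rfl⟩ := List.mem_drop_iff_getElem.1 hx
      by_contra hne
      have hj0 : j ≠ 0 := by rintro rfl; exact hne rfl
      refine hav (containsPat_one_one_two_iff.2
      ⟨c - 1, b, b + j, by omega, by omega, by omega, ?_, ?_⟩)
      · rw [getD_eq_of_take_eq_range' hpre (by omega), List.getD_eq_getElem _ _ hb]
        omega
      · rwa [List.getD_eq_getElem _ _ hb, List.getD_eq_getElem _ _ (by omega), ne_comm]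
    refine ⟨b, c, hc.1, by omega, hbn.le, .inl hbn, ?_⟩
    rw [← List.take_append_drop b w, hpre,
      (List.eq_replicate_iff (n := n - b)).2 ⟨by simp; omega, hconst⟩]
    rfl
  · refine ⟨b, b, hn, le_rfl, le_rfl, .inr rfl, ?_⟩
    rw [← List.take_of_length_le hlen.le, hpre]
    simp [stairWord]

/-- `⟨n, n⟩` stands for `1 2 ⋯ n = stairWord n n 0`, so that its term in the generating function
is the general one at `m = i = n`. -/
def stairIndex (n : ℕ) : Finset (Σ _ : ℕ, ℕ) :=
  insert ⟨n, n⟩ ((Icc 1 (n - 1)).sigma fun m => Icc 1 m)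

lemma mem_stairIndex {n : ℕ} (hn : 1 ≤ n) {p : Σ _ : ℕ, ℕ} :
    p ∈ stairIndex n ↔ 1 ≤ p.2 ∧ p.2 ≤ p.1 ∧ p.1 ≤ n ∧ (p.1 < n ∨ p.2 = p.1) := by
  rcases p with ⟨m, i⟩
  simp only [stairIndex, mem_insert, mem_sigma, mem_Icc, Sigma.mk.injEq, heq_eq_eq]
  omega

lemma stairWord_ne_of_lt {m i t m' i' t' : ℕ} (him : i ≤ m) (ht : 0 < t) (hm : m < m') :
    stairWord m i t ≠ stairWord m' i' t' := by
  intro h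
  have hget := congrArg (·.getD m 0) h
  rw [getD_stairWord (by omega), getD_stairWord (by omega), if_neg (lt_irrefl m),
    if_pos hm] at hget
  omega

lemma stairWord_injOn {n : ℕ} (hn : 1 ≤ n) :
    Set.InjOn (fun p : Σ _ : ℕ, ℕ => stairWord p.1 p.2 (n - p.1))
      (stairIndex n : Set (Σ _ : ℕ, ℕ)) := by
  rintro ⟨m, i⟩ hp ⟨m', i'⟩ hp' h
  obtain ⟨hi, him, hmn, hmi⟩ := (mem_stairIndex hn).1 hp
  obtain ⟨hi', him', hmn', hmi'⟩ := (mem_stairIndex hn).1 hp'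
  dsimp only at hi him hmn hmi hi' him' hmn' hmi' h
  obtain rfl : m = m' := by
    by_contra hne
    rcases Nat.lt_or_gt_of_ne hne with hlt | hlt
    · exact stairWord_ne_of_lt him (by omega) hlt h
    · exact stairWord_ne_of_lt him' (by omega) hlt h.symm
  obtain rfl : i = i' := by
    rcases hmn.lt_or_eq with hmn | rfl
    · have hget := congrArg (·.getD m 0) h
      rwa [getD_stairWord (by omega), getD_stairWord (by omega), if_neg (lt_irrefl m),
        if_neg (lt_irrefl m)] at hget
    · omega
  rfl

lemma Rn_one_one_two_eq_image {n : ℕ} (hn : 1 ≤ n) :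
    Rn n [1, 1, 2] =
      (fun p : Σ _ : ℕ, ℕ => stairWord p.1 p.2 (n - p.1)) '' (stairIndex n : Set (Σ _ : ℕ, ℕ)) := by
  ext w
  constructor
  · intro hw
    obtain ⟨m, i, hi, him, hmn, hmi, rfl⟩ := exists_eq_stairWord_of_mem_Rn hn hw
    exact ⟨⟨m, i⟩, (mem_stairIndex hn).2 ⟨hi, him, hmn, hmi⟩, rfl⟩
  · rintro ⟨⟨m, i⟩, hp, rfl⟩
    obtain ⟨hi, him, hmn, -⟩ := (mem_stairIndex hn).1 hp
    dsimp only at hi him hmn ⊢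
    exact ⟨by simp only [length_stairWord]; omega, isRGF_stairWord hi him,
      not_containsPat_stairWord⟩

open MvPolynomial in
noncomputable def statWeight (w : List ℕ) : MvPolynomial (Fin 4) ℤ :=
  X 0 ^ statLB w * X 1 ^ statLS w * X 2 ^ statRB w * X 3 ^ statRS w

open MvPolynomial in
lemma statWeight_stairWord {n m i : ℕ} (hi : 1 ≤ i) (him : i ≤ m) (hmi : m < n ∨ i = m) :
    statWeight (stairWord m i (n - m)) = X 0 ^ ((n - m) * (m - i)) *
      X 1 ^ (m.choose 2 + (n - m) * (i - 1)) * X 2 ^ m.choose 2 * X 3 ^ (m - i) := by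
  rw [statWeight, statLB_stairWord hi him, statLS_stairWord hi him, statRB_stairWord him,
    statRS_stairWord]
  congr 2
  split_ifs <;> omega

open MvPolynomial in
/-- the four-variable generating function for `12/3`. -/
theorem stmt13 (n : ℕ) (hn : 1 ≤ n) :
    Fgen n [1, 1, 2] =
      (X 1 : MvPolynomial (Fin 4) ℤ) ^ n.choose 2 * X 2 ^ n.choose 2 +
        ∑ m ∈ Finset.Icc 1 (n - 1), ∑ i ∈ Finset.Icc 1 m,
          (X 0 : MvPolynomial (Fin 4) ℤ) ^ ((n - m) * (m - i)) *
            X 1 ^ (m.choose 2 + (n - m) * (i - 1)) *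
            X 2 ^ m.choose 2 * X 3 ^ (m - i) := by
  calc Fgen n [1, 1, 2]
      = ∑ p ∈ stairIndex n, statWeight (stairWord p.1 p.2 (n - p.1)) := by
        rw [← finsum_mem_coe_finset, ← finsum_mem_image (stairWord_injOn hn),
          ← Rn_one_one_two_eq_image hn]
        rfl
    _ = _ := by
        rw [stairIndex, sum_insert (by simp; omega), sum_sigma,
          statWeight_stairWord hn le_rfl (.inr rfl)]
        refine congrArg₂ (· + ·) (by simp) <| sum_congr rfl fun m hm =>
          sum_congr rfl fun i hi => ?_
        rw [mem_Icc] at hm hi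
        exact statWeight_stairWord (m := m) hi.1 hi.2 (.inl (by omega))
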